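/- arXiv:2211.10275 — 2 statements merged into one kernel-verified Lean document; each statement's English description precedes it below -/
import Mathlib

section
/- (δ-regularity of the disk) Let U = B₁(0) ⊂ ℝ² be the open unit disk and 0 < δ < 1. If V ⊂ ℝ² is a bounded domain diffeomorphic to the unit disk whose boundary ∂V is contained in the annulus Neigh_δ(∂U) = B_{1+δ}(0) \ B̄_{1−δ}(0), then V itself is contained in Neigh_δ(∂U) or V contains B̄_{1−δ}(0); in particular if additionally ∂V avoids a ball B_δ(x) for some x ∈ ∂U, then V ⊂ Neigh_δ(∂U). -/
/-- Exit lemma: a continuous path starting in an open set and leaving it at time `T`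
hits the frontier at some time in `(0, T]`. -/
lemma exit_frontier {E : Type*} [NormedAddCommGroup E]
    (V : Set E) (hVo : IsOpen V) (γ : ℝ → E) (hγ : Continuous γ)
    (h0 : γ 0 ∈ V) (T : ℝ) (hTV : γ T ∉ V) (hT : 0 ≤ T) :
    ∃ t, 0 < t ∧ t ≤ T ∧ γ t ∈ frontier V := by
  set S : Set ℝ := Set.Ici 0 ∩ γ ⁻¹' Vᶜ with hS
  have hScl : IsClosed S := isClosed_Ici.inter (hVo.isClosed_compl.preimage hγ)
  have hSne : S.Nonempty := ⟨T, hT, hTV⟩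
  have hSbdd : BddBelow S := ⟨0, fun t ht => ht.1⟩
  have hmem : sInf S ∈ S := hScl.csInf_mem hSne hSbdd
  have h0le : 0 ≤ sInf S := hmem.1
  have hne0 : sInf S ≠ 0 := by
    intro h
    rw [h] at hmem
    exact hmem.2 h0
  have hpos : 0 < sInf S := lt_of_le_of_ne h0le (Ne.symm hne0)
  have hleT : sInf S ≤ T := csInf_le hSbdd ⟨hT, hTV⟩
  refine ⟨sInf S, hpos, hleT, ?_⟩
  rw [hVo.frontier_eq]
  refine ⟨?_, hmem.2⟩
  have hmaps : Set.MapsTo γ (Set.Ico 0 (sInf S)) V := by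
    intro t ht
    by_contra hc
    exact absurd (csInf_le hSbdd ⟨ht.1, hc⟩) (not_le_of_gt ht.2)
  have hcl : sInf S ∈ closure (Set.Ico 0 (sInf S)) := by
    rw [closure_Ico (ne_of_lt hpos)]
    exact ⟨h0le, le_refl _⟩
  exact map_mem_closure hγ hcl hmaps

/-- Points in the open annulus are δ-close to the unit sphere. -/
lemma annulus_mem_neigh {E : Type*} [NormedAddCommGroup E] [NormedSpace ℝ E]
    (δ : ℝ) (hδ1 : δ < 1) (y : E) (h1 : 1 - δ < ‖y‖) (h2 : ‖y‖ < 1 + δ) :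
    Metric.infDist y (Metric.sphere (0 : E) 1) < δ := by
  have hy0 : y ≠ 0 := by
    intro h
    rw [h, norm_zero] at h1
    linarith
  have hny : (0:ℝ) < ‖y‖ := norm_pos_iff.mpr hy0
  set p : E := ‖y‖⁻¹ • y with hp
  have hpmem : p ∈ Metric.sphere (0 : E) 1 := by
    rw [mem_sphere_zero_iff_norm]
    exact norm_smul_inv_norm hy0
  have hdist : dist y p = |‖y‖ - 1| := by
    rw [dist_eq_norm, hp]
    have : y - ‖y‖⁻¹ • y = (1 - ‖y‖⁻¹) • y := by
      rw [sub_smul, one_smul]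
    rw [this, norm_smul, Real.norm_eq_abs, ← abs_of_pos hny, ← abs_mul]
    congr 1
    field_simp
    rw [abs_of_pos hny]; ring
  have hle := Metric.infDist_le_dist_of_mem (x := y) hpmem
  rw [hdist] at hle
  have : |‖y‖ - 1| < δ := abs_lt.mpr ⟨by linarith, by linarith⟩
  linarith

/-- δ-regularity of the unit disk: if a Jordan domain `V` has its boundary in the
annulus `Neigh_δ(∂B₁(0)) = B_{1+δ}(0) \ B̄_{1-δ}(0)`, then `V` is contained in the
annulus or contains `B̄_{1-δ}(0)`; in particular, if `∂V` also avoids `B_δ(x)` for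
some `x` on the unit circle, then `V` is contained in the annulus. -/
theorem stmt_10 (δ : ℝ) (hδ0 : 0 < δ) (hδ1 : δ < 1)
    (V : Set (EuclideanSpace ℝ (Fin 2))) (hVo : IsOpen V)
    (hVb : Bornology.IsBounded V) (hVc : IsConnected V)
    (hVsc : SimplyConnectedSpace V)
    (hbV : frontier V ⊆
      Metric.ball (0 : EuclideanSpace ℝ (Fin 2)) (1 + δ)
        \ Metric.closedBall (0 : EuclideanSpace ℝ (Fin 2)) (1 - δ)) :
    (V ⊆ {y | Metric.infDist y (Metric.sphere (0 : EuclideanSpace ℝ (Fin 2)) 1) < δ}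
      ∨ Metric.closedBall (0 : EuclideanSpace ℝ (Fin 2)) (1 - δ) ⊆ V) ∧
    (∀ x ∈ Metric.sphere (0 : EuclideanSpace ℝ (Fin 2)) 1,
      frontier V ∩ Metric.ball x δ = ∅ →
      V ⊆ {y | Metric.infDist y (Metric.sphere (0 : EuclideanSpace ℝ (Fin 2)) 1) < δ}) := by
  obtain ⟨R, hR⟩ := hVb.subset_closedBall 0
  have hVball : V ⊆ Metric.ball (0 : EuclideanSpace ℝ (Fin 2)) (1 + δ) := by
    intro v hv
    by_contra hcon
    rw [Metric.mem_ball, dist_zero_right, not_lt] at hcon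
    have hv0 : v ≠ 0 := by
      intro h; rw [h, norm_zero] at hcon; linarith
    have hnv : (0:ℝ) < ‖v‖ := norm_pos_iff.mpr hv0
    set γ : ℝ → EuclideanSpace ℝ (Fin 2) := fun t => (1 + t) • v with hγdef
    have hγc : Continuous γ := (continuous_const.add continuous_id).smul continuous_const
    have hγ0 : γ 0 ∈ V := by simpa [hγdef] using hv
    set T : ℝ := |R| / ‖v‖ with hTdef
    have hT0 : 0 ≤ T := div_nonneg (abs_nonneg R) hnv.le
    have hγT : γ T ∉ V := by
      intro hmem
      have := hR hmem
      rw [Metric.mem_closedBall, dist_zero_right, hγdef] at this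
      have hnorm : ‖(1 + T) • v‖ = (1 + T) * ‖v‖ := by
        rw [norm_smul, Real.norm_eq_abs, abs_of_pos (by linarith : (0:ℝ) < 1 + T)]
      rw [hnorm] at this
      have hTv : T * ‖v‖ = |R| := div_mul_cancel₀ _ (ne_of_gt hnv)
      have h1 : ‖v‖ + |R| ≤ R := by nlinarith
      have h2 := le_abs_self R
      nlinarith
    obtain ⟨t, ht0, htT, htf⟩ := exit_frontier V hVo γ hγc hγ0 T hγT hT0
    have := (hbV htf).1
    rw [Metric.mem_ball, dist_zero_right, hγdef] at this
    have hnorm : ‖(1 + t) • v‖ = (1 + t) * ‖v‖ := by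
      rw [norm_smul, Real.norm_eq_abs, abs_of_pos (by linarith : (0:ℝ) < 1 + t)]
    rw [hnorm] at this
    nlinarith
  have hdicho : (V ⊆ {y | Metric.infDist y
        (Metric.sphere (0 : EuclideanSpace ℝ (Fin 2)) 1) < δ}
      ∨ Metric.closedBall (0 : EuclideanSpace ℝ (Fin 2)) (1 - δ) ⊆ V) := by
    by_cases hcase :
        (Metric.closedBall (0 : EuclideanSpace ℝ (Fin 2)) (1 - δ) ∩ V).Nonempty
    · right
      have hKpre : IsPreconnected
          (Metric.closedBall (0 : EuclideanSpace ℝ (Fin 2)) (1 - δ)) :=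
        (convex_closedBall (0 : EuclideanSpace ℝ (Fin 2)) (1-δ)).isPreconnected
      have hKsub : Metric.closedBall (0 : EuclideanSpace ℝ (Fin 2)) (1 - δ)
          ⊆ V ∪ (closure V)ᶜ := by
        intro p hp
        by_cases hpV : p ∈ V
        · exact Or.inl hpV
        · by_cases hpc : p ∈ closure V
          · exfalso
            have : p ∈ frontier V := by
              rw [hVo.frontier_eq]; exact ⟨hpc, hpV⟩
            exact (hbV this).2 hp
          · exact Or.inr hpc
      have hdisj : Disjoint V (closure V)ᶜ :=
        Set.disjoint_compl_right_iff_subset.mpr subset_closure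
      exact hKpre.subset_left_of_subset_union hVo (isClosed_closure.isOpen_compl)
        hdisj hKsub hcase
    · left
      intro v hv
      have h1 : 1 - δ < ‖v‖ := by
        by_contra h
        rw [not_lt] at h
        exact hcase ⟨v, by rwa [Metric.mem_closedBall, dist_zero_right], hv⟩
      have h2 : ‖v‖ < 1 + δ := by
        have := hVball hv
        rwa [Metric.mem_ball, dist_zero_right] at this
      exact annulus_mem_neigh δ hδ1 v h1 h2
  refine ⟨hdicho, ?_⟩
  intro x hx hempty
  rcases hdicho with h | h
  · exact h
  · exfalso
    rw [mem_sphere_zero_iff_norm] at hx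
    set γ : ℝ → EuclideanSpace ℝ (Fin 2) := fun t => (1 - δ + t) • x with hγdef
    have hγc : Continuous γ := (continuous_const.add continuous_id).smul continuous_const
    have hγ0 : γ 0 ∈ V := by
      apply h
      rw [Metric.mem_closedBall, dist_zero_right, hγdef]
      simp only [add_zero]
      rw [norm_smul, Real.norm_eq_abs, hx, mul_one, abs_of_pos (by linarith : (0:ℝ) < 1 - δ)]
    have hγT : γ (2 * δ) ∉ V := by
      intro hmem
      have := hVball hmem
      rw [Metric.mem_ball, dist_zero_right, hγdef] at this
      simp only at this
      rw [norm_smul, Real.norm_eq_abs, hx, mul_one,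
        abs_of_pos (by linarith : (0:ℝ) < 1 - δ + 2 * δ)] at this
      linarith
    obtain ⟨t, ht0, htT, htf⟩ := exit_frontier V hVo γ hγc hγ0 (2 * δ) hγT (by linarith)
    have hnormt : ‖γ t‖ = 1 - δ + t := by
      rw [hγdef]
      simp only
      rw [norm_smul, Real.norm_eq_abs, hx, mul_one,
        abs_of_pos (by linarith : (0:ℝ) < 1 - δ + t)]
    have htlt : t < 2 * δ := by
      by_contra hc
      rw [not_lt] at hc
      have heq : t = 2 * δ := le_antisymm htT hc
      have := (hbV htf).1
      rw [Metric.mem_ball, dist_zero_right, hnormt, heq] at this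
      linarith
    have hdx : dist (γ t) x < δ := by
      rw [hγdef, dist_eq_norm]
      have hsub : (1 - δ + t) • x - x = (t - δ) • x := by
        have hone : x = (1:ℝ) • x := (one_smul ℝ x).symm
        nth_rewrite 2 [hone]
        rw [← sub_smul]; congr 1; ring
      simp only
      rw [hsub, norm_smul, Real.norm_eq_abs, hx, mul_one]
      exact abs_lt.mpr ⟨by linarith, by linarith⟩
    have hin : γ t ∈ frontier V ∩ Metric.ball x δ := ⟨htf, by rwa [Metric.mem_ball]⟩
    rw [hempty] at hin
    exact hin
end

section
/- For angle α ∈ (0, π/2], define C(α) = max over t' ∈ [0, 1/sin α − sin α] of min{ √((1/sin α − t')² + (tan α · t')²), t'/cos α, 1 + 2 sin α · t' }. Then C(α) ≤ min{3, 1/sin α} for all α ∈ (0, π/2], and C(π/4) = 1. -/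
/-- The worst-case corner constant `C(α)` of Section 3.3. -/
noncomputable def Ccorner (α : ℝ) : ℝ :=
  sSup ((fun t' =>
      min (min (Real.sqrt ((1 / Real.sin α - t') ^ 2 + (Real.tan α * t') ^ 2))
          (t' / Real.cos α))
        (1 + 2 * Real.sin α * t')) ''
    Set.Icc 0 (1 / Real.sin α - Real.sin α))

/-- `C(α) ≤ min{3, 1/sin α}` for all `α ∈ (0, π/2]`, and `C(π/4) = 1`. -/
theorem stmt_19 :
    (∀ α ∈ Set.Ioc (0 : ℝ) (Real.pi / 2), Ccorner α ≤ min 3 (1 / Real.sin α)) ∧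
    Ccorner (Real.pi / 4) = 1 := by
  constructor
  · rintro α ⟨hα0, hα2⟩
    have hpi := Real.pi_pos
    have hs : 0 < Real.sin α := Real.sin_pos_of_pos_of_lt_pi hα0 (by linarith)
    have hs1 : Real.sin α ≤ 1 := Real.sin_le_one α
    have hc : 0 ≤ Real.cos α := Real.cos_nonneg_of_mem_Icc ⟨by linarith, hα2⟩
    have hc1 : Real.cos α ≤ 1 := Real.cos_le_one α
    have hpyth := Real.sin_sq_add_cos_sq α
    have h1s : 1 / Real.sin α * Real.sin α = 1 := one_div_mul_cancel hs.ne'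
    apply Real.sSup_le
    · rintro x ⟨t, ⟨ht0, ht1⟩, rfl⟩
      have hts : t * Real.sin α ≤ Real.cos α ^ 2 := by nlinarith
      simp only [le_min_iff]
      constructor
      · calc min (min (Real.sqrt ((1 / Real.sin α - t) ^ 2 + (Real.tan α * t) ^ 2))
              (t / Real.cos α)) (1 + 2 * Real.sin α * t)
            ≤ 1 + 2 * Real.sin α * t := min_le_right _ _
          _ ≤ 3 := by nlinarith
      · refine le_trans ((min_le_left _ _).trans (min_le_right _ _)) ?_
        rcases eq_or_lt_of_le hc with h0 | h0
        · rw [← h0, div_zero]; positivity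
        · rw [div_le_div_iff₀ h0 hs]
          nlinarith
    · exact le_min (by norm_num) (by positivity)
  · have h2 : Real.sqrt 2 ^ 2 = 2 := Real.sq_sqrt (by norm_num)
    have h2pos : 0 < Real.sqrt 2 := Real.sqrt_pos.mpr (by norm_num)
    have hsin : Real.sin (Real.pi / 4) = Real.sqrt 2 / 2 := Real.sin_pi_div_four
    have hcos : Real.cos (Real.pi / 4) = Real.sqrt 2 / 2 := Real.cos_pi_div_four
    have htan : Real.tan (Real.pi / 4) = 1 := Real.tan_pi_div_four
    have hend : 1 / Real.sin (Real.pi / 4) - Real.sin (Real.pi / 4) = Real.sqrt 2 / 2 := by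
      rw [hsin]
      field_simp
      nlinarith
    apply le_antisymm
    · apply Real.sSup_le
      · rintro x ⟨t, ⟨ht0, ht1⟩, rfl⟩
        rw [hend] at ht1
        refine le_trans ((min_le_left _ _).trans (min_le_right _ _)) ?_
        rw [hcos, div_le_one (by positivity)]
        linarith
      · norm_num
    · apply le_csSup
      · refine ⟨1, ?_⟩
        rintro x ⟨t, ⟨ht0, ht1⟩, rfl⟩
        rw [hend] at ht1
        refine le_trans ((min_le_left _ _).trans (min_le_right _ _)) ?_
        rw [hcos, div_le_one (by positivity)]
        linarith
      · refine ⟨Real.sqrt 2 / 2, ⟨by positivity, by rw [hend]⟩, ?_⟩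
        rw [hsin, hcos, htan]
        have e1 : 1 / (Real.sqrt 2 / 2) - Real.sqrt 2 / 2 = Real.sqrt 2 / 2 := by
          field_simp; nlinarith
        have e2 : (Real.sqrt 2 / 2) ^ 2 + (1 * (Real.sqrt 2 / 2)) ^ 2 = 1 := by nlinarith
        have e3 : Real.sqrt ((Real.sqrt 2 / 2) ^ 2 + (1 * (Real.sqrt 2 / 2)) ^ 2) = 1 := by
          rw [e2, Real.sqrt_one]
        have e4 : Real.sqrt 2 / 2 / (Real.sqrt 2 / 2) = 1 := div_self (by positivity)
        have e5 : 1 + 2 * (Real.sqrt 2 / 2) * (Real.sqrt 2 / 2) = 2 := by nlinarith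
        simp only [e1, e3, e4, e5]
        norm_num
end
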